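/- arXiv:2108.05623 — 4 statements merged into one kernel-verified Lean document; each statement's English description precedes it below -/
import Mathlib

section
/- If M ≤ CS and M > Ck, then for every kernel tensor K ∈ ℝ^{M×C×k}, with SN ≥ k, the 1D circular layer transform matrix 𝒦 ∈ ℝ^{MN×CSN} has rank at most CkN < MN, hence 𝒦𝒦ᵀ ≠ I_{MN}. -/
open Matrix BigOperators

/-- Spectral norm (largest singular value) of a real matrix,
as the operator norm of the induced map between Euclidean spaces. -/
noncomputable def spec {m n : Type*} [Fintype m] [Fintype n] [DecidableEq n]
    (A : Matrix m n ℝ) : ℝ :=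
  ‖(Matrix.toEuclideanLin A).toContinuousLinearMap‖

/-- Squared Frobenius norm of a matrix. -/
def frob2 {m n : Type*} [Fintype m] [Fintype n] (A : Matrix m n ℝ) : ℝ :=
  ∑ i, ∑ j, (A i j) ^ 2

/-- The stride-`S` sampling matrix `S_N ∈ ℝ^{N×SN}`, `(S_N)_{i,j} = 1` iff `j = S·i`. -/
def samp (S N : ℕ) : Matrix (Fin N) (Fin (S * N)) ℝ :=
  Matrix.of fun i j => if (j : ℕ) = S * (i : ℕ) then 1 else 0

open Fin.CommRing in
/-- Circular embedding `P_n : ℝ^k → ℝ^n` (`k = 2r+1`): places `h j` at position `(r - j) mod n`,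
i.e. `[P_n(h)]_i = h_{r-i}` for `i ∈ [-r,r] mod n`, and `0` otherwise. -/
noncomputable def Pemb (r n : ℕ) [NeZero n] (h : Fin (2*r+1) → ℝ) : Fin n → ℝ :=
  fun i => ∑ j : Fin (2*r+1), if i = (((r : ℤ) - (j : ℤ) : ℤ) : Fin n) then h j else 0

/-- Layer transform matrix `𝒦 ∈ ℝ^{MN×CSN}` of a 1D circular strided convolutional layer
with kernel tensor `K ∈ ℝ^{M×C×k}`: block `(i,j)` is `S_N · C(P_{SN}(K_{i,j}))`. -/
noncomputable def layerMat (M C r S N : ℕ) [NeZero (S*N)]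
    (K : Fin M → Fin C → Fin (2*r+1) → ℝ) :
    Matrix (Fin M × Fin N) (Fin C × Fin (S*N)) ℝ :=
  Matrix.of fun p q =>
    (samp S N * Matrix.circulant (Pemb r (S*N) (K p.1 q.1))) p.2 q.2

/-- `conv(h,g, padding zero = P, stride = S) ∈ ℝ^{2P/S+1}` with `P = ⌊(k-1)/S⌋·S`, `k = 2r+1`:
the strided zero-padded cross-correlation of `h` and `g`. -/
noncomputable def convPS (r S : ℕ) (h g : Fin (2*r+1) → ℝ) :
    Fin (2*((2*r)/S)+1) → ℝ :=
  fun i => ∑ i' : Fin (2*r+1),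
    h i' *
      (if hd : ((2*r)/S)*S ≤ S * (i : ℕ) + (i' : ℕ) ∧
               S * (i : ℕ) + (i' : ℕ) ≤ ((2*r)/S)*S + 2*r
       then g ⟨S * (i : ℕ) + (i' : ℕ) - ((2*r)/S)*S, by omega⟩ else 0)

open Fin.CommRing in
/-- Circular embedding `Q_{S,N} : ℝ^{2q+1} → ℝ^N` (`q = P/S`): places `x j` at position
`(j - q) mod N`, so the central coordinate `x_q` sits at index `0`. -/
noncomputable def Qemb (q N : ℕ) [NeZero N] (x : Fin (2*q+1) → ℝ) : Fin N → ℝ :=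
  fun i => ∑ j : Fin (2*q+1), if i = (((j : ℤ) - (q : ℤ) : ℤ) : Fin N) then x j else 0

/-- `L_orth` raw sum: `‖CONV(K,K,padding = P, stride = S) − I_{r0}‖_F²`. -/
noncomputable def Lraw (M C r S : ℕ) (K : Fin M → Fin C → Fin (2*r+1) → ℝ) : ℝ :=
  ∑ m : Fin M, ∑ l : Fin M, ∑ t : Fin (2*((2*r)/S)+1),
    ((∑ c : Fin C, convPS r S (K m c) (K l c) t) -
      (if m = l ∧ (t : ℕ) = (2*r)/S then 1 else 0)) ^ 2

/-- `'valid'` boundary single-channel transform matrix `A_N(h) ∈ ℝ^{(N−k+1)×N}`. -/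
def validMat (r N : ℕ) (h : Fin (2*r+1) → ℝ) :
    Matrix (Fin (N - (2*r+1) + 1)) (Fin N) ℝ :=
  Matrix.of fun i j =>
    if hd : (i : ℕ) ≤ (j : ℕ) ∧ (j : ℕ) - (i : ℕ) ≤ 2*r
    then h ⟨(j : ℕ) - (i : ℕ), by omega⟩ else 0

/-- Zero-padding `'same'` single-channel transform matrix `A_N(h) ∈ ℝ^{N×N}`:
`A_N(h)_{i,j} = h_{j−i+r}` when `|j−i| ≤ r`, and `0` otherwise. -/
def sameMat (r N : ℕ) (h : Fin (2*r+1) → ℝ) : Matrix (Fin N) (Fin N) ℝ :=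
  Matrix.of fun i j =>
    if hd : (i : ℕ) ≤ (j : ℕ) + r ∧ (j : ℕ) ≤ (i : ℕ) + r
    then h ⟨(j : ℕ) + r - (i : ℕ), by omega⟩ else 0

/-- Left factor of the layer matrix. -/
noncomputable def Lmat (M C r S N : ℕ) (K : Fin M → Fin C → Fin (2*r+1) → ℝ) :
    Matrix (Fin M × Fin N) (Fin C × Fin (2*r+1) × Fin N) ℝ :=
  Matrix.of fun p q => if q.2.2 = p.2 then K p.1 q.1 q.2.1 else 0

open Fin.CommRing in
/-- Right factor of the layer matrix. -/
noncomputable def Rmat (C r S N : ℕ) [NeZero (S*N)] :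
    Matrix (Fin C × Fin (2*r+1) × Fin N) (Fin C × Fin (S*N)) ℝ :=
  Matrix.of fun q b =>
    if b.1 = q.1 ∧ b.2 = (((S*((q.2.2:ℕ):ℤ) - (r:ℤ) + ((q.2.1:ℕ):ℤ)) : ℤ) : Fin (S*N))
    then 1 else 0

open Fin.CommRing in
lemma layerMat_factor (M C r S N : ℕ) [NeZero (S*N)]
    (K : Fin M → Fin C → Fin (2*r+1) → ℝ) :
    layerMat M C r S N K = Lmat M C r S N K * Rmat C r S N := by
  have hS : 0 < S := by
    rcases Nat.eq_zero_or_pos S with h | h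
    · exact absurd (by simp [h]) (NeZero.ne (S*N))
    · exact h
  ext ⟨m, i⟩ ⟨c, j⟩
  have hSi : S * (i : ℕ) < S * N := (Nat.mul_lt_mul_left hS).mpr i.isLt
  have lhs_eq : layerMat M C r S N K (m, i) (c, j) =
      ∑ t : Fin (2*r+1),
        if (⟨S * (i:ℕ), hSi⟩ : Fin (S*N)) - j = (((r:ℤ) - ((t:ℕ):ℤ) : ℤ) : Fin (S*N))
        then K m c t else 0 := by
    simp only [layerMat, Matrix.of_apply, Matrix.mul_apply, samp, Matrix.circulant_apply]
    rw [Finset.sum_eq_single (⟨S * (i:ℕ), hSi⟩ : Fin (S*N))]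
    · simp [Pemb]
    · intro b _ hb
      have : (b : ℕ) ≠ S * (i:ℕ) := fun h => hb (Fin.ext h)
      simp [this]
    · simp
  rw [lhs_eq]
  simp only [Matrix.mul_apply, Fintype.sum_prod_type, Lmat, Rmat, Matrix.of_apply]
  rw [Finset.sum_comm]
  apply Finset.sum_congr rfl
  intro t _
  rw [Finset.sum_eq_single c]
  · rw [Finset.sum_eq_single i]
    · have key : ((⟨S * (i:ℕ), hSi⟩ : Fin (S*N)) - j
            = (((r:ℤ) - ((t:ℕ):ℤ) : ℤ) : Fin (S*N)))
          ↔ (j = (((S*((i:ℕ):ℤ) - (r:ℤ) + ((t:ℕ):ℤ)) : ℤ) : Fin (S*N))) := by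
        have h1 : (⟨S * (i:ℕ), hSi⟩ : Fin (S*N)) = ((S * (i:ℕ) : ℕ) : Fin (S*N)) :=
          (Fin.ext (Fin.val_cast_of_lt hSi)).symm
        rw [h1]
        push_cast
        constructor <;> intro h <;> linear_combination -h
      rw [if_congr key rfl rfl]
      simp
    · intro b _ hb
      simp [hb]
    · simp
  · intro b _ hb
    simp [Ne.symm hb]
  · simp

/-- if `M ≤ CS` and `M > Ck`, then for every kernel tensor (with `SN ≥ k`)
the layer transform matrix has rank at most `CkN < MN`, hence `𝒦𝒦ᵀ ≠ I_{MN}`. -/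
theorem stmt9 (M C r S N : ℕ) [NeZero (S*N)] (hM : M ≤ C*S) (hMk : C*(2*r+1) < M)
    (hk : 2*r+1 ≤ S*N) (K : Fin M → Fin C → Fin (2*r+1) → ℝ) :
    (layerMat M C r S N K).rank ≤ C*(2*r+1)*N ∧
    C*(2*r+1)*N < M*N ∧
    layerMat M C r S N K * (layerMat M C r S N K)ᵀ ≠ 1 := by
  have hN : 0 < N := by
    rcases Nat.eq_zero_or_pos N with h | h
    · exact absurd (by simp [h]) (NeZero.ne (S*N))
    · exact h
  have hrank : (layerMat M C r S N K).rank ≤ C*(2*r+1)*N := by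
    rw [layerMat_factor]
    calc (Lmat M C r S N K * Rmat C r S N).rank
        ≤ (Rmat C r S N).rank := Matrix.rank_mul_le_right _ _
      _ ≤ Fintype.card (Fin C × Fin (2*r+1) × Fin N) := Matrix.rank_le_card_height _
      _ = C*(2*r+1)*N := by simp [mul_assoc]
  have hlt : C*(2*r+1)*N < M*N := (Nat.mul_lt_mul_right hN).mpr hMk
  refine ⟨hrank, hlt, ?_⟩
  intro hI
  have h1 : (layerMat M C r S N K * (layerMat M C r S N K)ᵀ).rank = M*N := by
    rw [hI, Matrix.rank_one]; simp
  have h2 : (layerMat M C r S N K * (layerMat M C r S N K)ᵀ).rank ≤ C*(2*r+1)*N :=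
    le_trans (Matrix.rank_mul_le_left _ _) hrank
  omega
end

section
/- Consider a 1D convolutional layer of odd kernel size k = 2r+1 and stride 1 with zero-padding 'same' boundary conditions on inputs of size N ≥ k, so that the single-channel transform of h ∈ ℝ^k is the banded matrix A_N(h) ∈ ℝ^{N×N} with A_N(h)_{i,j} = h_{j−i+r} when |j−i| ≤ r and 0 otherwise. If the layer transform matrix 𝒦 (with blocks A_N(K_{m,c})) is orthogonal (𝒦𝒦ᵀ = I_{MN} when M ≤ C, or 𝒦ᵀ𝒦 = I_{CN} when M ≥ C), then every kernel K_{m,c} is supported only at its central coefficient: K_{m,c,i} = 0 for all i ≠ r. -/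
open Matrix BigOperators

/-- The zero-padding 'same' layer transform matrix with blocks `A_N(K_{m,c})`. -/
def sameLayer (M C r N : ℕ) (K : Fin M → Fin C → Fin (2*r+1) → ℝ) :
    Matrix (Fin M × Fin N) (Fin C × Fin N) ℝ :=
  Matrix.of fun p q => sameMat r N (K p.1 q.1) p.2 q.2

lemma rowKey (r N : ℕ) (hN : 2*r+1 ≤ N) (h : Fin (2*r+1) → ℝ) (i : Fin N) :
    ∑ s : Fin N, (sameMat r N h i s)^2
      = ∑ j : Fin (2*r+1),
          if r ≤ (i:ℕ)+(j:ℕ) ∧ (i:ℕ)+(j:ℕ)+1 ≤ r+N then (h j)^2 else 0 := by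
  set g : ℕ → ℝ := fun t => if ht : t < 2*r+1 then (h ⟨t,ht⟩)^2 else 0 with hg
  have step1 : ∀ s : Fin N, (sameMat r N h i s)^2
      = if (i:ℕ) ≤ (s:ℕ)+r ∧ (s:ℕ) ≤ (i:ℕ)+r then g ((s:ℕ)+r-(i:ℕ)) else 0 := by
    intro s
    simp only [sameMat, Matrix.of_apply, hg]
    split_ifs with hd h2
    · rfl
    · omega
    · simp
  have step2 : ∀ j : Fin (2*r+1),
      (if r ≤ (i:ℕ)+(j:ℕ) ∧ (i:ℕ)+(j:ℕ)+1 ≤ r+N then (h j)^2 else 0)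
      = if r ≤ (i:ℕ)+(j:ℕ) ∧ (i:ℕ)+(j:ℕ)+1 ≤ r+N then g (j:ℕ) else 0 := by
    intro j
    simp [hg, j.isLt, Nat.le_of_lt_succ j.isLt]
  simp_rw [step1, step2]
  rw [← Finset.sum_filter, ← Finset.sum_filter]
  refine Finset.sum_bij' (fun s hs => (⟨(s:ℕ)+r-(i:ℕ), by
      simp only [Finset.mem_filter, Finset.mem_univ, true_and] at hs; omega⟩ : Fin (2*r+1)))
    (fun j hj => (⟨(i:ℕ)+(j:ℕ)-r, by
      simp only [Finset.mem_filter, Finset.mem_univ, true_and] at hj; omega⟩ : Fin N))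
    ?_ ?_ ?_ ?_ ?_ <;>
    intro a ha <;> simp only [Finset.mem_filter, Finset.mem_univ, true_and] at ha ⊢ <;>
    first
      | omega
      | (ext; simp; omega)
      | (congr 1; simp; omega)

lemma colKey (r N : ℕ) (hN : 2*r+1 ≤ N) (h : Fin (2*r+1) → ℝ) (s : Fin N) :
    ∑ i : Fin N, (sameMat r N h i s)^2
      = ∑ j : Fin (2*r+1),
          if (j:ℕ) ≤ (s:ℕ)+r ∧ (s:ℕ)+r+1 ≤ N+(j:ℕ) then (h j)^2 else 0 := by
  set g : ℕ → ℝ := fun t => if ht : t < 2*r+1 then (h ⟨t,ht⟩)^2 else 0 with hg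
  have step1 : ∀ i : Fin N, (sameMat r N h i s)^2
      = if (i:ℕ) ≤ (s:ℕ)+r ∧ (s:ℕ) ≤ (i:ℕ)+r then g ((s:ℕ)+r-(i:ℕ)) else 0 := by
    intro i
    simp only [sameMat, Matrix.of_apply, hg]
    split_ifs with hd h2
    · rfl
    · omega
    · simp
  have step2 : ∀ j : Fin (2*r+1),
      (if (j:ℕ) ≤ (s:ℕ)+r ∧ (s:ℕ)+r+1 ≤ N+(j:ℕ) then (h j)^2 else 0)
      = if (j:ℕ) ≤ (s:ℕ)+r ∧ (s:ℕ)+r+1 ≤ N+(j:ℕ) then g (j:ℕ) else 0 := by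
    intro j
    simp [hg, j.isLt, Nat.le_of_lt_succ j.isLt]
  simp_rw [step1, step2]
  rw [← Finset.sum_filter, ← Finset.sum_filter]
  refine Finset.sum_bij' (fun i hi => (⟨(s:ℕ)+r-(i:ℕ), by
      simp only [Finset.mem_filter, Finset.mem_univ, true_and] at hi; omega⟩ : Fin (2*r+1)))
    (fun j hj => (⟨(s:ℕ)+r-(j:ℕ), by
      simp only [Finset.mem_filter, Finset.mem_univ, true_and] at hj; omega⟩ : Fin N))
    ?_ ?_ ?_ ?_ ?_ <;>
    intro a ha <;> simp only [Finset.mem_filter, Finset.mem_univ, true_and] at ha ⊢ <;>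
    first
      | omega
      | (ext; simp; omega)
      | (congr 1; simp; omega)

lemma extract {ι : Type*} [Fintype ι] {n : ℕ} (F : ι → Fin n → ℝ)
    (hF : ∀ c j, 0 ≤ F c j) (P : Fin n → Prop) [DecidablePred P]
    (h1 : ∑ c, ∑ j, F c j = 1)
    (h2 : (∑ c, ∑ j, if P j then F c j else 0) = 1)
    (c0 : ι) (j0 : Fin n) (hj0 : ¬ P j0) : F c0 j0 = 0 := by
  have hz : ∑ c, ∑ j, (if P j then (0:ℝ) else F c j) = 0 := by
    have he : ∀ c : ι, ∀ j : Fin n,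
        (if P j then (0:ℝ) else F c j) = F c j - (if P j then F c j else 0) := by
      intro c j; split <;> ring
    simp_rw [he, Finset.sum_sub_distrib]
    rw [h1, h2]; ring
  have hnn : ∀ (c : ι) (j : Fin n), 0 ≤ (if P j then (0:ℝ) else F c j) := by
    intro c j; split
    · exact le_rfl
    · exact hF c j
  have h3 := (Finset.sum_eq_zero_iff_of_nonneg (fun c _ =>
      Finset.sum_nonneg fun j _ => hnn c j)).mp hz c0 (Finset.mem_univ _)
  have h4 := (Finset.sum_eq_zero_iff_of_nonneg (fun j _ => hnn c0 j)).mp h3 j0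
      (Finset.mem_univ _)
  simpa [hj0] using h4

/-- 'same' zero padding: if `N ≥ k` and the layer transform matrix is
orthogonal (`𝒦𝒦ᵀ = I` when `M ≤ C`, or `𝒦ᵀ𝒦 = I` when `M ≥ C`), then each kernel is
supported only at its central coefficient. -/
theorem stmt11 (M C r N : ℕ) (hN : 2*r+1 ≤ N)
    (K : Fin M → Fin C → Fin (2*r+1) → ℝ)
    (hortho : (M ≤ C ∧ sameLayer M C r N K * (sameLayer M C r N K)ᵀ = 1) ∨
              (C ≤ M ∧ (sameLayer M C r N K)ᵀ * sameLayer M C r N K = 1)) :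
    ∀ (m : Fin M) (c : Fin C) (i : Fin (2*r+1)), (i : ℕ) ≠ r → K m c i = 0 := by
  intro m c i hi
  have hiLt := i.isLt
  rcases hortho with ⟨_, hA⟩ | ⟨_, hA⟩
  · -- rows orthonormal
    have hsum : ∀ ii : Fin N, ∑ cc : Fin C, ∑ j : Fin (2*r+1),
        (if r ≤ (ii:ℕ)+(j:ℕ) ∧ (ii:ℕ)+(j:ℕ)+1 ≤ r+N then (K m cc j)^2 else 0) = 1 := by
      intro ii
      have h0 := congrFun (congrFun hA (m, ii)) (m, ii)
      rw [Matrix.mul_apply] at h0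
      simp only [Matrix.transpose_apply, Matrix.one_apply_eq] at h0
      calc ∑ cc : Fin C, ∑ j : Fin (2*r+1),
            (if r ≤ (ii:ℕ)+(j:ℕ) ∧ (ii:ℕ)+(j:ℕ)+1 ≤ r+N then (K m cc j)^2 else 0)
          = ∑ cc : Fin C, ∑ s : Fin N, (sameMat r N (K m cc) ii s)^2 := by
            exact Finset.sum_congr rfl fun cc _ => (rowKey r N hN (K m cc) ii).symm
        _ = ∑ x : Fin C × Fin N,
              sameLayer M C r N K (m, ii) x * sameLayer M C r N K (m, ii) x := by
            rw [Fintype.sum_prod_type]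
            exact Finset.sum_congr rfl fun cc _ => Finset.sum_congr rfl fun s _ => (sq _)
        _ = 1 := h0
    rcases Nat.lt_or_ge (i:ℕ) r with hlt | hge
    · have hfull := hsum ⟨r, by omega⟩
      simp only [Fin.val_mk] at hfull
      have h1 : ∑ cc : Fin C, ∑ j : Fin (2*r+1), (K m cc j)^2 = 1 := by
        rw [← hfull]
        refine Finset.sum_congr rfl fun cc _ => Finset.sum_congr rfl fun j _ => ?_
        have := j.isLt
        rw [if_pos (by omega)]
      have h0 := hsum ⟨0, by omega⟩
      simp only [Fin.val_mk, Nat.zero_add] at h0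
      have h2 : ∑ cc : Fin C, ∑ j : Fin (2*r+1),
          (if r ≤ (j:ℕ) then (K m cc j)^2 else 0) = 1 := by
        rw [← h0]
        refine Finset.sum_congr rfl fun cc _ => Finset.sum_congr rfl fun j _ => ?_
        refine if_congr ?_ rfl rfl
        have := j.isLt
        omega
      have hz := extract (fun cc j => (K m cc j)^2) (fun cc j => sq_nonneg _)
        (fun j => r ≤ (j:ℕ)) h1 h2 c i (by omega)
      exact (pow_eq_zero_iff two_ne_zero).mp hz
    · have hfull := hsum ⟨r, by omega⟩
      simp only [Fin.val_mk] at hfull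
      have h1 : ∑ cc : Fin C, ∑ j : Fin (2*r+1), (K m cc j)^2 = 1 := by
        rw [← hfull]
        refine Finset.sum_congr rfl fun cc _ => Finset.sum_congr rfl fun j _ => ?_
        have := j.isLt
        rw [if_pos (by omega)]
      have h0 := hsum ⟨N-1, by omega⟩
      simp only [Fin.val_mk] at h0
      have h2 : ∑ cc : Fin C, ∑ j : Fin (2*r+1),
          (if (j:ℕ) ≤ r then (K m cc j)^2 else 0) = 1 := by
        rw [← h0]
        refine Finset.sum_congr rfl fun cc _ => Finset.sum_congr rfl fun j _ => ?_
        refine if_congr ?_ rfl rfl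
        have := j.isLt
        omega
      have hz := extract (fun cc j => (K m cc j)^2) (fun cc j => sq_nonneg _)
        (fun j => (j:ℕ) ≤ r) h1 h2 c i (by omega)
      exact (pow_eq_zero_iff two_ne_zero).mp hz
  · -- columns orthonormal
    have hsum : ∀ ss : Fin N, ∑ mm : Fin M, ∑ j : Fin (2*r+1),
        (if (j:ℕ) ≤ (ss:ℕ)+r ∧ (ss:ℕ)+r+1 ≤ N+(j:ℕ) then (K mm c j)^2 else 0) = 1 := by
      intro ss
      have h0 := congrFun (congrFun hA (c, ss)) (c, ss)
      rw [Matrix.mul_apply] at h0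
      simp only [Matrix.transpose_apply, Matrix.one_apply_eq] at h0
      calc ∑ mm : Fin M, ∑ j : Fin (2*r+1),
            (if (j:ℕ) ≤ (ss:ℕ)+r ∧ (ss:ℕ)+r+1 ≤ N+(j:ℕ) then (K mm c j)^2 else 0)
          = ∑ mm : Fin M, ∑ ii : Fin N, (sameMat r N (K mm c) ii ss)^2 := by
            exact Finset.sum_congr rfl fun mm _ => (colKey r N hN (K mm c) ss).symm
        _ = ∑ x : Fin M × Fin N,
              sameLayer M C r N K x (c, ss) * sameLayer M C r N K x (c, ss) := by
            rw [Fintype.sum_prod_type]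
            exact Finset.sum_congr rfl fun mm _ => Finset.sum_congr rfl fun ii _ => (sq _)
        _ = 1 := h0
    rcases Nat.lt_or_ge (i:ℕ) r with hlt | hge
    · have hfull := hsum ⟨r, by omega⟩
      simp only [Fin.val_mk] at hfull
      have h1 : ∑ mm : Fin M, ∑ j : Fin (2*r+1), (K mm c j)^2 = 1 := by
        rw [← hfull]
        refine Finset.sum_congr rfl fun mm _ => Finset.sum_congr rfl fun j _ => ?_
        have := j.isLt
        rw [if_pos (by omega)]
      have h0 := hsum ⟨N-1, by omega⟩
      simp only [Fin.val_mk] at h0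
      have h2 : ∑ mm : Fin M, ∑ j : Fin (2*r+1),
          (if r ≤ (j:ℕ) then (K mm c j)^2 else 0) = 1 := by
        rw [← h0]
        refine Finset.sum_congr rfl fun mm _ => Finset.sum_congr rfl fun j _ => ?_
        refine if_congr ?_ rfl rfl
        have := j.isLt
        omega
      have hz := extract (fun mm j => (K mm c j)^2) (fun mm j => sq_nonneg _)
        (fun j => r ≤ (j:ℕ)) h1 h2 m i (by omega)
      exact (pow_eq_zero_iff two_ne_zero).mp hz
    · have hfull := hsum ⟨r, by omega⟩
      simp only [Fin.val_mk] at hfull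
      have h1 : ∑ mm : Fin M, ∑ j : Fin (2*r+1), (K mm c j)^2 = 1 := by
        rw [← hfull]
        refine Finset.sum_congr rfl fun mm _ => Finset.sum_congr rfl fun j _ => ?_
        have := j.isLt
        rw [if_pos (by omega)]
      have h0 := hsum ⟨0, by omega⟩
      simp only [Fin.val_mk, Nat.zero_add] at h0
      have h2 : ∑ mm : Fin M, ∑ j : Fin (2*r+1),
          (if (j:ℕ) ≤ r then (K mm c j)^2 else 0) = 1 := by
        rw [← h0]
        refine Finset.sum_congr rfl fun mm _ => Finset.sum_congr rfl fun j _ => ?_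
        refine if_congr ?_ rfl rfl
        have := j.isLt
        omega
      have hz := extract (fun mm j => (K mm c j)^2) (fun mm j => sq_nonneg _)
        (fun j => (j:ℕ) ≤ r) h1 h2 m i (by omega)
      exact (pow_eq_zero_iff two_ne_zero).mp hz
end

section
/- Let k = 2r+1, let S be a positive integer, P = ⌊(k−1)/S⌋·S, and N with SN ≥ 2k−1. For h, g ∈ ℝ^k, S_N C(P_{SN}(h)) C(P_{SN}(g))ᵀ S_Nᵀ = C(Q_{S,N}(conv(h, g, padding = P, stride = S))), where conv(h,g,padding=P,stride=S) ∈ ℝ^{2P/S+1} is the strided zero-padded cross-correlation of h and g, and Q_{S,N} embeds a vector of ℝ^{2P/S+1} circularly into ℝ^N with its central coordinate at index 0. -/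
open Matrix BigOperators

open Fin.CommRing

section helpers
variable {S N : ℕ}
def emb (hS : 0 < S) (i : Fin N) : Fin (S*N) := ⟨S * i, (Nat.mul_lt_mul_left hS).mpr i.isLt⟩
end helpers

lemma finValIntCast (n : ℕ) [NeZero n] (a : ℤ) : (((a : Fin n) : ℕ) : ℤ) = a % n := by
  rcases n with _ | m
  · exact absurd rfl (NeZero.ne 0)
  · exact ZMod.val_intCast (n := m+1) a

lemma intCast_fin_val (n : ℕ) [NeZero n] (a : ℕ) (hlt : a < n) :
    ((a : ℤ) : Fin n) = ⟨a, hlt⟩ := by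
  apply Fin.ext
  have h1 := finValIntCast n a
  rw [Int.emod_eq_of_lt (by positivity) (by exact_mod_cast hlt)] at h1
  exact_mod_cast h1

lemma intCast_eq_fin_iff (n : ℕ) [NeZero n] (a : ℕ) (ha : a < n) (x : Fin n) :
    ((a : ℤ) : Fin n) = x ↔ a = (x : ℕ) := by
  rw [intCast_fin_val n a ha, Fin.ext_iff]

lemma sum_pick {k : ℕ} (f : Fin k → ℝ) (w : ℕ) :
    (∑ j : Fin k, if (j : ℕ) = w then f j else 0)
      = if hw : w < k then f ⟨w, hw⟩ else 0 := by
  split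
  · next hw =>
    rw [Finset.sum_eq_single ⟨w, hw⟩]
    · simp
    · intro b _ hb; simp only [ite_eq_right_iff]; intro hbv; exact absurd (Fin.ext hbv) hb
    · simp
  · next hw =>
    refine Finset.sum_eq_zero fun b _ => ?_
    simp only [ite_eq_right_iff]; intro hbv; omega

-- condition conversion lemmas
lemma condL (r S N : ℕ) [NeZero (S*N)] (hS : 0 < S) (h2r : 2*r+1 ≤ S*N)
    (i j : Fin N) (i' j' : Fin (2*r+1)) :
    (emb hS j - (emb hS i - (((r:ℤ) - (i':ℤ) : ℤ) : Fin (S*N)))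
        = (((r:ℤ) - (j':ℤ) : ℤ) : Fin (S*N)))
      ↔ ((j' : ℕ) = ((((i':ℕ):ℤ) + (S:ℤ)*((i:ℕ):ℤ) - (S:ℤ)*((j:ℕ):ℤ) : ℤ) : Fin (S*N)).val) := by
  have hei : emb hS i = (((S * (i:ℕ) : ℕ) : ℤ) : Fin (S*N)) :=
    (intCast_fin_val _ _ ((Nat.mul_lt_mul_left hS).mpr i.isLt)).symm
  have hej : emb hS j = (((S * (j:ℕ) : ℕ) : ℤ) : Fin (S*N)) :=
    (intCast_fin_val _ _ ((Nat.mul_lt_mul_left hS).mpr j.isLt)).symm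
  rw [hei, hej, ← intCast_eq_fin_iff (S*N) (j':ℕ) (by omega)
      ((((i':ℕ):ℤ) + (S:ℤ)*((i:ℕ):ℤ) - (S:ℤ)*((j:ℕ):ℤ) : ℤ) : Fin (S*N))]
  constructor <;> intro hh
  · push_cast at hh ⊢; linear_combination hh
  · push_cast at hh ⊢; linear_combination hh

lemma condR (q N : ℕ) [NeZero N] (h2q : 2*q+1 ≤ N) (i j : Fin N) (u : Fin (2*q+1)) :
    (i - j = (((u:ℤ) - (q:ℤ) : ℤ) : Fin N))
      ↔ ((u : ℕ) = ((((q:ℕ):ℤ) + ((i:ℕ):ℤ) - ((j:ℕ):ℤ) : ℤ) : Fin N).val) := by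
  have hii : i = ((((i:ℕ):ℕ) : ℤ) : Fin N) := by
    rw [intCast_fin_val _ _ i.isLt]
  have hjj : j = ((((j:ℕ):ℕ) : ℤ) : Fin N) := by
    rw [intCast_fin_val _ _ j.isLt]
  rw [← intCast_eq_fin_iff N (u:ℕ) (by omega)
      ((((q:ℕ):ℤ) + ((i:ℕ):ℤ) - ((j:ℕ):ℤ) : ℤ) : Fin N)]
  constructor <;> intro hh
  · rw [hii, hjj] at hh; push_cast at hh ⊢; linear_combination -hh
  · rw [hii, hjj]; push_cast at hh ⊢; linear_combination -hh

lemma sum_shift {n : ℕ} [NeZero n] (a b c1 c2 : Fin n) (X Y : ℝ) :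
    (∑ t : Fin n, (if a - t = c1 then X else 0) * (if b - t = c2 then Y else 0))
      = if b - (a - c1) = c2 then X * Y else 0 := by
  rw [Finset.sum_eq_single (a - c1)]
  · rw [sub_sub_cancel]; split_ifs <;> simp_all
  · intro t _ ht
    have hne : a - t ≠ c1 := fun hc => ht (by rw [← hc, sub_sub_cancel])
    rw [if_neg hne, zero_mul]
  · simp

lemma keyInt (S r q v u p w z i' : ℤ) (hS : 0 < S) (hv : 4*r+1 ≤ v)
    (hw0 : 0 ≤ w) (hw1 : w < v)
    (hi0 : 0 ≤ i') (hi1 : i' ≤ 2*r) (hz0 : 0 ≤ z)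
    (hu : u = S*z) (hp : p = S*q) (hq1 : p ≤ 2*r) (hq2 : 2*r < p + S) (hr : 0 ≤ r)
    (huv : u + S ≤ v)
    (hcong : ∃ k : ℤ, u + i' - w - p = k * v) :
    (w ≤ 2*r ↔ (z ≤ 2*q ∧ p ≤ u + i' ∧ u + i' ≤ p + 2*r)) ∧
      (w ≤ 2*r → u + i' - p = w) := by
  have hv0 : 0 < v := by omega
  have hiff : z ≤ 2*q ↔ u < 2*p + S := by
    constructor
    · intro hzq
      have : S * z ≤ S * (2*q) := mul_le_mul_of_nonneg_left hzq hS.le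
      rw [hu, hp]; linarith
    · intro hlt
      have h2 : S * z < S * (2*q+1) := by
        rw [← hu]; rw [hp] at hlt; linarith
      exact Int.le_of_lt_add_one (lt_of_mul_lt_mul_left h2 hS.le)
  obtain ⟨k, hk⟩ := hcong
  have hu0 : 0 ≤ u := by rw [hu]; positivity
  have hk1 : k < 2 := by
    by_contra hcon
    have : 2 * v ≤ k * v := by
      apply mul_le_mul_of_nonneg_right _ hv0.le; omega
    omega
  have hk2 : -2 < k := by
    by_contra hcon
    have : k * v ≤ (-2) * v := by
      apply mul_le_mul_of_nonneg_right _ hv0.le; omega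
    omega
  clear hu hp
  interval_cases k <;> omega

lemma innerEq (r S N : ℕ) [NeZero (S*N)] [NeZero N] (hS : 0 < S) (hN : 4*r+1 ≤ S*N)
    (h g : Fin (2*r+1) → ℝ) (i j : Fin N) (i' : Fin (2*r+1)) :
    (∑ j' : Fin (2*r+1),
      if emb hS j - (emb hS i - (((r:ℤ) - (i':ℤ) : ℤ) : Fin (S*N)))
          = (((r:ℤ) - (j':ℤ) : ℤ) : Fin (S*N))
      then h i' * g j' else 0)
  = ∑ u : Fin (2*((2*r)/S)+1),
      if i - j = (((u:ℤ) - ((((2*r)/S) : ℕ):ℤ) : ℤ) : Fin N)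
      then h i' * (if hd : ((2*r)/S)*S ≤ S * (u : ℕ) + (i' : ℕ) ∧
               S * (u : ℕ) + (i' : ℕ) ≤ ((2*r)/S)*S + 2*r
       then g ⟨S * (u : ℕ) + (i' : ℕ) - ((2*r)/S)*S, by omega⟩ else 0) else 0 := by
  set q : ℕ := (2*r)/S with hqdef
  have hq1 : q * S ≤ 2*r := Nat.div_mul_le_self (2*r) S
  have hq2 : 2*r < q * S + S := by
    have h1 := Nat.div_add_mod (2*r) S
    rw [← hqdef] at h1
    have h2 := Nat.mod_lt (2*r) hS
    have h3 : q * S = S * q := Nat.mul_comm q S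
    omega
  have h2qN : 2*q + 1 ≤ N := by
    have h1 : (2*q)*S < N*S := by
      have : (2*q)*S ≤ 4*r := by nlinarith
      have hNS : S*N = N*S := Nat.mul_comm S N
      omega
    have := Nat.lt_of_mul_lt_mul_right h1
    omega
  set W : Fin (S*N) := ((((i':ℕ):ℤ) + (S:ℤ)*((i:ℕ):ℤ) - (S:ℤ)*((j:ℕ):ℤ) : ℤ) : Fin (S*N)) with hWdef
  set Z : Fin N := ((((q:ℕ):ℤ) + ((i:ℕ):ℤ) - ((j:ℕ):ℤ) : ℤ) : Fin N) with hZdef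
  -- rewrite both sums via condition conversion and sum_pick
  have hL : (∑ j' : Fin (2*r+1),
      if emb hS j - (emb hS i - (((r:ℤ) - (i':ℤ) : ℤ) : Fin (S*N)))
          = (((r:ℤ) - (j':ℤ) : ℤ) : Fin (S*N))
      then h i' * g j' else 0)
      = if hw : (W:ℕ) < 2*r+1 then h i' * g ⟨(W:ℕ), hw⟩ else 0 := by
    rw [← sum_pick (fun j' => h i' * g j') (W:ℕ)]
    exact Finset.sum_congr rfl fun j' _ =>
      if_congr (condL r S N hS (by omega) i j i' j') rfl rfl
  rw [hL]
  have hR : (∑ u : Fin (2*q+1),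
      if i - j = (((u:ℤ) - ((q : ℕ):ℤ) : ℤ) : Fin N)
      then h i' * (if hd : q*S ≤ S * (u : ℕ) + (i' : ℕ) ∧
               S * (u : ℕ) + (i' : ℕ) ≤ q*S + 2*r
       then g ⟨S * (u : ℕ) + (i' : ℕ) - q*S, by omega⟩ else 0) else 0)
      = if hz : (Z:ℕ) < 2*q+1 then
          (h i' * (if hd : q*S ≤ S * (Z:ℕ) + (i' : ℕ) ∧
               S * (Z:ℕ) + (i' : ℕ) ≤ q*S + 2*r
       then g ⟨S * (Z:ℕ) + (i' : ℕ) - q*S, by omega⟩ else 0)) else 0 := by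
    rw [← sum_pick (fun u : Fin (2*q+1) => h i' * (if hd : q*S ≤ S * (u : ℕ) + (i' : ℕ) ∧
               S * (u : ℕ) + (i' : ℕ) ≤ q*S + 2*r
       then g ⟨S * (u : ℕ) + (i' : ℕ) - q*S, by omega⟩ else 0)) (Z:ℕ)]
    exact Finset.sum_congr rfl fun u _ =>
      if_congr (condR q N h2qN i j u) rfl rfl
  rw [hR]
  -- integer facts
  have hWval : (((W:ℕ):ℤ)) = (((i':ℕ):ℤ) + (S:ℤ)*((i:ℕ):ℤ) - (S:ℤ)*((j:ℕ):ℤ)) % ((S:ℤ)*(N:ℤ)) := by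
    rw [hWdef, finValIntCast]; push_cast; ring_nf
  have hZval : (((Z:ℕ):ℤ)) = (((q:ℕ):ℤ) + ((i:ℕ):ℤ) - ((j:ℕ):ℤ)) % ((N:ℕ):ℤ) := by
    rw [hZdef, finValIntCast]
  obtain ⟨hiffK, heqK⟩ := keyInt (S:ℤ) (r:ℤ) (q:ℤ) ((S:ℤ)*(N:ℤ)) ((S:ℤ)*((Z:ℕ):ℤ)) ((S:ℤ)*(q:ℤ))
      ((W:ℕ):ℤ) ((Z:ℕ):ℤ) ((i':ℕ):ℤ)
      (by exact_mod_cast hS) (by exact_mod_cast hN)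
      (Int.natCast_nonneg _) (by exact_mod_cast W.isLt)
      (Int.natCast_nonneg _) (by exact_mod_cast Nat.lt_succ_iff.mp i'.isLt)
      (Int.natCast_nonneg _) rfl rfl
      (by push_cast; linarith [hq1]) (by push_cast; linarith [hq2])
      (Int.natCast_nonneg _)
      (by
        have hz1 : ((Z:ℕ):ℤ) + 1 ≤ (N:ℤ) := by exact_mod_cast Z.isLt
        nlinarith [hz1, (by exact_mod_cast hS : (0:ℤ) < (S:ℤ))])
      (⟨(((i':ℕ):ℤ) + (S:ℤ)*((i:ℕ):ℤ) - (S:ℤ)*((j:ℕ):ℤ)) / ((S:ℤ)*(N:ℤ))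
          - (((q:ℕ):ℤ) + ((i:ℕ):ℤ) - ((j:ℕ):ℤ)) / ((N:ℕ):ℤ), by
        rw [Int.emod_def] at hWval hZval
        linear_combination (S:ℤ) * hZval - hWval⟩)
  -- translate to ℕ
  have hiffN : ((W:ℕ) < 2*r+1) ↔ ((Z:ℕ) < 2*q+1 ∧ q*S ≤ S*(Z:ℕ) + (i':ℕ) ∧
      S*(Z:ℕ) + (i':ℕ) ≤ q*S + 2*r) := by
    constructor
    · intro hw
      have hw' : ((W:ℕ):ℤ) ≤ 2*(r:ℤ) := by exact_mod_cast Nat.lt_succ_iff.mp hw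
      obtain ⟨hz, hb1, hb2⟩ := hiffK.mp hw'
      refine ⟨?_, ?_, ?_⟩
      · have : ((Z:ℕ):ℤ) ≤ 2*(q:ℤ) := hz
        omega
      · have : ((q*S : ℕ):ℤ) ≤ ((S*(Z:ℕ) + (i':ℕ) : ℕ):ℤ) := by push_cast; linarith
        exact_mod_cast this
      · have : ((S*(Z:ℕ) + (i':ℕ) : ℕ):ℤ) ≤ ((q*S + 2*r : ℕ):ℤ) := by push_cast; linarith
        exact_mod_cast this
    · rintro ⟨hz, hb1, hb2⟩
      have hz' : ((Z:ℕ):ℤ) ≤ 2*(q:ℤ) := by omega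
      have hb1' : (S:ℤ)*(q:ℤ) ≤ (S:ℤ)*((Z:ℕ):ℤ) + ((i':ℕ):ℤ) := by
        have : ((q*S : ℕ):ℤ) ≤ ((S*(Z:ℕ) + (i':ℕ) : ℕ):ℤ) := by exact_mod_cast hb1
        push_cast at this; linarith
      have hb2' : (S:ℤ)*((Z:ℕ):ℤ) + ((i':ℕ):ℤ) ≤ (S:ℤ)*(q:ℤ) + 2*(r:ℤ) := by
        have : ((S*(Z:ℕ) + (i':ℕ) : ℕ):ℤ) ≤ ((q*S + 2*r : ℕ):ℤ) := by exact_mod_cast hb2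
        push_cast at this; linarith
      have := hiffK.mpr ⟨hz', hb1', hb2'⟩
      omega
  have heqN : (W:ℕ) < 2*r+1 → S*(Z:ℕ) + (i':ℕ) - q*S = (W:ℕ) := by
    intro hw
    have hw' : ((W:ℕ):ℤ) ≤ 2*(r:ℤ) := by exact_mod_cast Nat.lt_succ_iff.mp hw
    have := heqK hw'
    have hb1 := (hiffN.mp hw).2.1
    zify [hb1]
    linarith [this]
  by_cases hw : (W:ℕ) < 2*r+1
  · rw [dif_pos hw]
    obtain ⟨hz, hb⟩ := hiffN.mp hw
    rw [dif_pos hz, dif_pos hb]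
    congr 1
    apply congrArg
    apply Fin.ext
    exact (heqN hw).symm
  · rw [dif_neg hw]
    by_cases hz : (Z:ℕ) < 2*q+1
    · rw [dif_pos hz, dif_neg, mul_zero]
      exact fun hb => hw (hiffN.mpr ⟨hz, hb⟩)
    · rw [dif_neg hz]


set_option maxHeartbeats 1000000 in
/-- for `SN ≥ 2k−1`, `P = ⌊(k−1)/S⌋·S`,
`S_N C(P_{SN}(h)) C(P_{SN}(g))ᵀ S_Nᵀ = C(Q_{S,N}(conv(h,g,padding = P,stride = S)))`. -/
theorem stmt12 (r S N : ℕ) [NeZero (S*N)] [NeZero N] (hS : 0 < S) (hN : 4*r+1 ≤ S*N)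
    (h g : Fin (2*r+1) → ℝ) :
    samp S N * Matrix.circulant (Pemb r (S*N) h) *
        (Matrix.circulant (Pemb r (S*N) g))ᵀ * (samp S N)ᵀ
      = Matrix.circulant (Qemb ((2*r)/S) N (convPS r S h g)) := by
  have hL0 : ∀ (M : Matrix (Fin N) (Fin (S*N)) ℝ) (i j : Fin N),
      (M * (samp S N)ᵀ) i j = M i (emb hS j) := by
    intro M i j
    rw [Matrix.mul_apply]
    rw [Finset.sum_eq_single (emb hS j)]
    · simp [samp, emb, Matrix.transpose_apply]
    · intro b _ hb
      have : (b : ℕ) ≠ S * (j : ℕ) := fun hc => hb (Fin.ext (by simp [emb, hc]))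
      simp [samp, Matrix.transpose_apply, this]
    · simp
  have hL1 : ∀ (M : Matrix (Fin (S*N)) (Fin (S*N)) ℝ) (i : Fin N) (u : Fin (S*N)),
      (samp S N * M) i u = M (emb hS i) u := by
    intro M i u
    rw [Matrix.mul_apply]
    rw [Finset.sum_eq_single (emb hS i)]
    · simp [samp, emb]
    · intro b _ hb
      have : (b : ℕ) ≠ S * (i : ℕ) := fun hc => hb (Fin.ext (by simp [emb, hc]))
      simp [samp, this]
    · simp
  ext i j
  rw [hL0, Matrix.mul_assoc, hL1, Matrix.mul_apply, Matrix.circulant_apply]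
  simp only [Matrix.transpose_apply, Matrix.circulant_apply]
  have lhs_eq : (∑ t, Pemb r (S*N) h (emb hS i - t) * Pemb r (S*N) g (emb hS j - t))
      = ∑ j' : Fin (2*r+1), ∑ i' : Fin (2*r+1),
          if emb hS j - (emb hS i - (((r:ℤ) - (i':ℤ) : ℤ) : Fin (S*N)))
              = (((r:ℤ) - (j':ℤ) : ℤ) : Fin (S*N))
          then h i' * g j' else 0 := by
    simp only [Pemb, Finset.sum_mul, Finset.mul_sum]
    rw [Finset.sum_comm]
    refine Finset.sum_congr rfl fun j' _ => ?_
    rw [Finset.sum_comm]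
    refine Finset.sum_congr rfl fun i' _ => ?_
    exact sum_shift _ _ _ _ _ _
  have rhs_eq : Qemb ((2*r)/S) N (convPS r S h g) (i - j)
      = ∑ i' : Fin (2*r+1), ∑ u : Fin (2*((2*r)/S)+1),
          if i - j = (((u:ℤ) - ((((2*r)/S) : ℕ):ℤ) : ℤ) : Fin N)
          then h i' * (if hd : ((2*r)/S)*S ≤ S * (u : ℕ) + (i' : ℕ) ∧
                   S * (u : ℕ) + (i' : ℕ) ≤ ((2*r)/S)*S + 2*r
           then g ⟨S * (u : ℕ) + (i' : ℕ) - ((2*r)/S)*S, by omega⟩ else 0) else 0 := by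
    simp only [Qemb, convPS]
    have push : ∀ (P : Prop) [Decidable P] (f : Fin (2*r+1) → ℝ),
        (if P then (∑ x, f x) else 0) = ∑ x, (if P then f x else 0) := by
      intro P _ f; split <;> simp
    calc (∑ u : Fin (2*((2*r)/S)+1),
          if i - j = (((u:ℤ) - ((((2*r)/S) : ℕ):ℤ) : ℤ) : Fin N)
          then (∑ i' : Fin (2*r+1),
            h i' * (if hd : ((2*r)/S)*S ≤ S * (u : ℕ) + (i' : ℕ) ∧
                   S * (u : ℕ) + (i' : ℕ) ≤ ((2*r)/S)*S + 2*r
             then g ⟨S * (u : ℕ) + (i' : ℕ) - ((2*r)/S)*S, by omega⟩ else 0)) else 0)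
        = ∑ u : Fin (2*((2*r)/S)+1), ∑ i' : Fin (2*r+1),
            (if i - j = (((u:ℤ) - ((((2*r)/S) : ℕ):ℤ) : ℤ) : Fin N)
            then h i' * (if hd : ((2*r)/S)*S ≤ S * (u : ℕ) + (i' : ℕ) ∧
                   S * (u : ℕ) + (i' : ℕ) ≤ ((2*r)/S)*S + 2*r
             then g ⟨S * (u : ℕ) + (i' : ℕ) - ((2*r)/S)*S, by omega⟩ else 0) else 0) :=
          Finset.sum_congr rfl fun u _ => push _ _
      _ = _ := Finset.sum_comm
  rw [lhs_eq, rhs_eq]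
  exact Finset.sum_comm.trans (Finset.sum_congr rfl fun i' _ => innerEq r S N hS hN h g i j i')
end

section
/- (Frobenius stability, 1D, CO case.) Let K ∈ ℝ^{M×C×k}, k odd, P = ⌊(k−1)/S⌋·S, M ≥ CS, and N with SN ≥ 2k−1. Then ‖𝒦ᵀ𝒦 − I_{CSN}‖_F² = N · (‖CONV(K, K, padding = P, stride = S) − I_{r0}‖_F² − (M − CS)). -/
open Matrix BigOperators

open Fin.CommRing

lemma frob2_eq_trace {m n : Type*} [Fintype m] [Fintype n] (A : Matrix m n ℝ) :
    frob2 A = Matrix.trace (Aᵀ * A) := by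
  unfold frob2
  rw [Matrix.trace, Finset.sum_comm]
  simp [Matrix.diag, Matrix.mul_apply, sq]

lemma frob2_gram {m n : Type*} [Fintype m] [Fintype n] [DecidableEq m] [DecidableEq n]
    (A : Matrix m n ℝ) :
    frob2 (Aᵀ * A - 1) = frob2 (A * Aᵀ - 1) + (Fintype.card n : ℝ) - (Fintype.card m : ℝ) := by
  rw [frob2_eq_trace, frob2_eq_trace]
  have h1 : ((Aᵀ * A - 1)ᵀ * (Aᵀ * A - 1)) = Aᵀ * (A * Aᵀ * A) - Aᵀ * A - Aᵀ * A + 1 := by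
    rw [Matrix.transpose_sub, Matrix.transpose_mul, Matrix.transpose_transpose,
      Matrix.transpose_one]
    noncomm_ring
    rw [show Aᵀ * A * (Aᵀ * A) = Aᵀ * (A * Aᵀ * A) by rw [Matrix.mul_assoc, Matrix.mul_assoc]]
    abel
  have h2 : ((A * Aᵀ - 1)ᵀ * (A * Aᵀ - 1)) = (A * Aᵀ * A) * Aᵀ - A * Aᵀ - A * Aᵀ + 1 := by
    rw [Matrix.transpose_sub, Matrix.transpose_mul, Matrix.transpose_transpose,
      Matrix.transpose_one]
    noncomm_ring
    rw [show A * Aᵀ * (A * Aᵀ) = A * Aᵀ * A * Aᵀ by rw [Matrix.mul_assoc (A * Aᵀ)]]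
    abel
  rw [h1, h2]
  simp only [Matrix.trace_add, Matrix.trace_sub, Matrix.trace_one]
  rw [Matrix.trace_mul_comm (Aᵀ) (A * Aᵀ * A), Matrix.trace_mul_comm (Aᵀ) A]
  ring

lemma fin_intCast_eq_iff (n : ℕ) [NeZero n] (x y : ℤ) :
    (x : Fin n) = (y : Fin n) ↔ (n:ℤ) ∣ (y - x) := by
  obtain ⟨m, rfl⟩ : ∃ m, n = m+1 := ⟨n-1, (Nat.succ_pred_eq_of_ne_zero (NeZero.ne n)).symm⟩
  rw [show ((x : Fin (m+1)) = y) ↔ ((x : ZMod (m+1)) = y) from Iff.rfl,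
    ZMod.intCast_eq_intCast_iff]
  exact Int.modEq_iff_dvd

lemma fin_natCast_int (n : ℕ) [NeZero n] (a : ℕ) (h : a < n) :
    (((a : ℕ) : ℤ) : Fin n) = ⟨a, h⟩ := by
  rw [Int.cast_natCast]
  apply Fin.ext
  simp [Fin.val_natCast, Nat.mod_eq_of_lt h]

lemma layerMat_apply (M C r S N : ℕ) [NeZero (S*N)] (hS : 0 < S)
    (K : Fin M → Fin C → Fin (2*r+1) → ℝ) (m : Fin M) (n : Fin N) (c : Fin C) (j : Fin (S*N)) :
    layerMat M C r S N K (m, n) (c, j)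
      = Pemb r (S*N) (K m c) (((((S : ℕ) * (n:ℕ) : ℕ) : ℤ) : Fin (S*N)) - j) := by
  have hlt : S * (n:ℕ) < S * N := by exact (Nat.mul_lt_mul_left hS).mpr n.isLt
  show (samp S N * Matrix.circulant (Pemb r (S*N) (K m c))) n j = _
  rw [Matrix.mul_apply, Finset.sum_eq_single (⟨S * (n:ℕ), hlt⟩ : Fin (S*N))]
  · rw [Matrix.circulant_apply, fin_natCast_int (S*N) (S*(n:ℕ)) hlt]
    simp [samp]
  · intro k _ hk
    have : ¬ ((k:ℕ) = S * (n:ℕ)) := fun hc => hk (Fin.ext hc)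
    simp [samp, this]
  · intro h; exact absurd (Finset.mem_univ _) h

lemma gram_entry (M C r S N : ℕ) [NeZero (S*N)] (hS : 0 < S)
    (K : Fin M → Fin C → Fin (2*r+1) → ℝ) (m l : Fin M) (n n' : Fin N) :
    (layerMat M C r S N K * (layerMat M C r S N K)ᵀ) ((m, n)) ((l, n'))
      = ∑ c : Fin C, ∑ a : Fin (2*r+1), ∑ b : Fin (2*r+1),
          K m c a * K l c b *
            (if (((a:ℤ) - (b:ℤ)) : Fin (S*N)) =
                ((((S*(n':ℕ) : ℕ) : ℤ) - ((S*(n:ℕ) : ℕ) : ℤ)) : Fin (S*N)) then 1 else 0) := by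
  rw [Matrix.mul_apply, Fintype.sum_prod_type]
  apply Finset.sum_congr rfl
  intro c _
  simp only [Matrix.transpose_apply]
  set u : Fin (S*N) := (((S*(n:ℕ) : ℕ) : ℤ) : Fin (S*N)) with hu
  set v : Fin (S*N) := (((S*(n':ℕ) : ℕ) : ℤ) : Fin (S*N)) with hv
  have hL : ∀ j : Fin (S*N),
      layerMat M C r S N K (m, n) (c, j) * layerMat M C r S N K (l, n') (c, j)
        = Pemb r (S*N) (K m c) (u - j) * Pemb r (S*N) (K l c) (v - j) := by
    intro j
    rw [layerMat_apply M C r S N hS K m n c j, layerMat_apply M C r S N hS K l n' c j]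
  rw [Finset.sum_congr rfl (fun j _ => hL j)]
  rw [Fintype.sum_equiv (Equiv.subLeft u)
    (fun j => Pemb r (S*N) (K m c) (u - j) * Pemb r (S*N) (K l c) (v - j))
    (fun x => Pemb r (S*N) (K m c) x * Pemb r (S*N) (K l c) (v - u + x))
    (by intro x; simp only [Equiv.subLeft_apply]; congr 1; abel_nf)]
  unfold Pemb
  have step1 : ∀ x : Fin (S*N),
      (∑ a : Fin (2*r+1), if x = (((r:ℤ) - a : ℤ) : Fin (S*N)) then K m c a else 0) *
      (∑ b : Fin (2*r+1), if v - u + x = (((r:ℤ) - b : ℤ) : Fin (S*N)) then K l c b else 0)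
      = ∑ a : Fin (2*r+1), ∑ b : Fin (2*r+1),
          if x = (((r:ℤ) - a : ℤ) : Fin (S*N)) then
            (if v - u + x = (((r:ℤ) - b : ℤ) : Fin (S*N)) then K m c a * K l c b else 0)
          else 0 := by
    intro x
    rw [Finset.sum_mul_sum]
    exact Finset.sum_congr rfl fun a _ => Finset.sum_congr rfl fun b _ => by
      split_ifs <;> simp
  rw [Finset.sum_congr rfl fun x _ => step1 x, Finset.sum_comm]
  apply Finset.sum_congr rfl
  intro a _
  rw [Finset.sum_comm]
  apply Finset.sum_congr rfl
  intro b _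
  rw [Finset.sum_ite_eq' Finset.univ ((((r:ℤ) - a : ℤ) : Fin (S*N)))
      (fun x => if v - u + x = (((r:ℤ) - b : ℤ) : Fin (S*N)) then K m c a * K l c b else 0),
    if_pos (Finset.mem_univ _)]
  have hiff : (v - u + (((r:ℤ) - a : ℤ) : Fin (S*N)) = (((r:ℤ) - b : ℤ) : Fin (S*N)))
      ↔ ((((a : ℕ) : ℤ) : Fin (S*N)) - (((b : ℕ) : ℤ) : Fin (S*N)) = v - u) := by
    constructor <;> intro h <;> push_cast at h ⊢ <;> linear_combination -h
  rw [if_congr hiff rfl rfl]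
  split_ifs <;> simp

lemma conv_core (r P st : ℕ) (h g : Fin (2*r+1) → ℝ) :
    (∑ a : Fin (2*r+1), ∑ b : Fin (2*r+1),
      h a * g b * (if ((a:ℕ):ℤ) - ((b:ℕ):ℤ) = (P:ℤ) - (st:ℤ) then 1 else 0))
    = ∑ a : Fin (2*r+1), h a * (if hd : P ≤ st + (a:ℕ) ∧ st + (a:ℕ) ≤ P + 2*r
        then g ⟨st + (a:ℕ) - P, by omega⟩ else 0) := by
  apply Finset.sum_congr rfl
  intro a _
  by_cases hc : P ≤ st + (a:ℕ) ∧ st + (a:ℕ) ≤ P + 2*r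
  · rw [dif_pos hc]
    rw [Finset.sum_eq_single (⟨st + (a:ℕ) - P, by omega⟩ : Fin (2*r+1))]
    · rw [if_pos (by simp only [Fin.val_mk]; omega), mul_one]
    · intro b _ hb
      rw [if_neg, mul_zero]
      intro hcon
      exact hb (Fin.ext (by simp only [Fin.val_mk]; omega))
    · intro hmem; exact absurd (Finset.mem_univ _) hmem
  · rw [dif_neg hc, mul_zero]
    apply Finset.sum_eq_zero
    intro b _
    rw [if_neg, mul_zero]
    intro hcon
    exact hc ⟨by omega, by omega⟩

lemma conv_eq (r S : ℕ) (h g : Fin (2*r+1) → ℝ) (t : Fin (2*((2*r)/S)+1)) :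
    (∑ a : Fin (2*r+1), ∑ b : Fin (2*r+1),
      h a * g b * (if ((a:ℕ):ℤ) - ((b:ℕ):ℤ) = ((((2*r)/S)*S : ℕ):ℤ) - ((S*(t:ℕ) : ℕ):ℤ) then 1 else 0))
    = convPS r S h g t := by
  rw [conv_core]
  rfl

lemma int_dvd_small (D x : ℤ) (hD : 0 < D) (h : D ∣ x) (h1 : -D < x) (h2 : x < D) : x = 0 := by
  rcases h with ⟨k, rfl⟩
  rcases lt_trichotomy k 0 with hk|hk|hk
  · nlinarith
  · simp [hk]
  · nlinarith

lemma fin_intCast_val (n : ℕ) [NeZero n] (v : Fin n) : (((v : ℕ) : ℤ) : Fin n) = v := by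
  rw [Int.cast_natCast, Fin.cast_val_eq_self]


lemma fin_eq_intCast_iff (n : ℕ) [NeZero n] (v : Fin n) (x : ℤ) :
    ((x : Fin n) = v) ↔ (n:ℤ) ∣ (((v:ℕ):ℤ) - x) := by
  constructor
  · intro h
    apply (fin_intCast_eq_iff n x (((v:ℕ):ℤ))).mp
    rw [fin_intCast_val]; exact h
  · intro h
    have h2 := (fin_intCast_eq_iff n x (((v:ℕ):ℤ))).mpr h
    rwa [fin_intCast_val] at h2

lemma rowSum (M C r S N : ℕ) [NeZero (S*N)] [NeZero N] (hS : 0 < S)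
    (hN4 : 4*r+1 ≤ S*N)
    (K : Fin M → Fin C → Fin (2*r+1) → ℝ) (m l : Fin M) (n : Fin N) :
    (∑ n' : Fin N,
      ((layerMat M C r S N K * (layerMat M C r S N K)ᵀ) ((m,n)) ((l,n'))
        - if ((m,n) : Fin M × Fin N) = (l,n') then 1 else 0)^2)
    = ∑ t : Fin (2*((2*r)/S)+1),
        ((∑ c : Fin C, convPS r S (K m c) (K l c) t)
          - if m = l ∧ (t:ℕ) = (2*r)/S then 1 else 0)^2 := by
  set q : ℕ := (2*r)/S with hqdef
  have hS0 : (S:ℤ) ≠ 0 := by positivity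
  have hS1 : (1:ℤ) ≤ (S:ℤ) := by exact_mod_cast hS
  have hq2r : (S:ℤ)*(q:ℤ) ≤ 2*(r:ℤ) := by
    have h : S*q ≤ 2*r := by rw [mul_comm]; exact Nat.div_mul_le_self (2*r) S
    exact_mod_cast h
  have hSN : (4*(r:ℤ)+1) ≤ ((S*N : ℕ) : ℤ) := by exact_mod_cast hN4
  have hSNpos : (0:ℤ) < ((S*N:ℕ):ℤ) := by linarith [sq_nonneg (r:ℤ)]
  have hSN' : ((S*N:ℕ):ℤ) = (S:ℤ)*(N:ℤ) := by push_cast; ring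
  have hqN' : 2*(q:ℤ) < (N:ℤ) := by nlinarith
  have hqN : 2*q < N := by exact_mod_cast hqN'
  set ψ : Fin (2*q+1) → Fin N :=
    fun t => ((((n:ℕ):ℤ) + (q:ℤ) - ((t:ℕ):ℤ) : ℤ) : Fin N) with hψdef
  have hpsi : ∀ t : Fin (2*q+1),
      ψ t = ((((n:ℕ):ℤ) + (q:ℤ) - ((t:ℕ):ℤ) : ℤ) : Fin N) := fun t => by rw [hψdef]
  have hval : ∀ t : Fin (2*q+1),
      (N:ℤ) ∣ ((((n:ℕ):ℤ) + (q:ℤ) - ((t:ℕ):ℤ)) - (((ψ t : ℕ):ℤ))) := by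
    intro t
    have h2 : ((((ψ t : ℕ):ℤ)) : Fin N) = ((((n:ℕ):ℤ) + (q:ℤ) - ((t:ℕ):ℤ) : ℤ) : Fin N) := by
      rw [fin_intCast_val, hpsi]
    exact (fin_intCast_eq_iff N _ _).mp h2
  have hinj : Function.Injective ψ := by
    intro t t' h
    have h2 : ((((t:ℕ):ℤ)) : Fin N) = ((((t':ℕ):ℤ)) : Fin N) := by
      have e1 := hpsi t; have e2 := hpsi t'
      rw [h] at e1
      have e3 : ((((n:ℕ):ℤ) + (q:ℤ) - ((t:ℕ):ℤ) : ℤ) : Fin N)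
          = ((((n:ℕ):ℤ) + (q:ℤ) - ((t':ℕ):ℤ) : ℤ) : Fin N) := by rw [← e1, e2]
      have hd := (fin_intCast_eq_iff N _ _).mp e3
      rw [fin_intCast_eq_iff]
      rw [show ((((t':ℕ):ℤ)) - (((t:ℕ):ℤ))) = -((((n:ℕ):ℤ) + (q:ℤ) - ((t':ℕ):ℤ)) - ((((n:ℕ):ℤ) + (q:ℤ) - ((t:ℕ):ℤ)))) by ring]
      exact dvd_neg.mpr hd
    have hd := (fin_intCast_eq_iff N _ _).mp h2
    have hb1 : ((t:ℕ):ℤ) < 2*q+1 := by exact_mod_cast t.isLt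
    have hb2 : ((t':ℕ):ℤ) < 2*q+1 := by exact_mod_cast t'.isLt
    have h0 : (((t':ℕ):ℤ) - ((t:ℕ):ℤ)) = 0 := by
      apply int_dvd_small (N:ℤ) _ (by exact_mod_cast Nat.pos_of_ne_zero (NeZero.ne N)) hd
      · linarith [Int.natCast_nonneg (t:ℕ), Int.natCast_nonneg (t':ℕ)]
      · linarith [Int.natCast_nonneg (t:ℕ), Int.natCast_nonneg (t':ℕ)]
    exact Fin.ext (by omega)
  have hpsiq : ψ ⟨q, by omega⟩ = n := by
    rw [hpsi]
    apply (fin_eq_intCast_iff N n _).mpr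
    rw [show ((((n:ℕ):ℤ)) - ((((n:ℕ):ℤ) + (q:ℤ) - (((((⟨q, by omega⟩ : Fin (2*q+1))):ℕ)):ℤ)))) = (0:ℤ) by simp]
    exact dvd_zero _
  have hneq : ∀ t : Fin (2*q+1), (n = ψ t ↔ (t:ℕ) = q) := by
    intro t
    constructor
    · intro h
      have h2 : ((((n:ℕ):ℤ) + (q:ℤ) - ((t:ℕ):ℤ) : ℤ) : Fin N) = n := by
        rw [← hpsi, ← h]
      have hd := (fin_eq_intCast_iff N n _).mp h2
      rw [show ((((n:ℕ):ℤ)) - ((((n:ℕ):ℤ) + (q:ℤ) - ((t:ℕ):ℤ)))) = (((t:ℕ):ℤ) - (q:ℤ)) by ring] at hd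
      have hb1 : ((t:ℕ):ℤ) < 2*q+1 := by exact_mod_cast t.isLt
      have h0 : (((t:ℕ):ℤ) - (q:ℤ)) = 0 := by
        apply int_dvd_small (N:ℤ) _ (by exact_mod_cast Nat.pos_of_ne_zero (NeZero.ne N)) hd
        · linarith [Int.natCast_nonneg (t:ℕ)]
        · linarith [Int.natCast_nonneg (t:ℕ)]
      omega
    · intro h
      have : t = ⟨q, by omega⟩ := Fin.ext h
      rw [this, hpsiq]
  have hdm : (S:ℤ)*(q:ℤ) + (((2*r)%S : ℕ):ℤ) = 2*(r:ℤ) := by exact_mod_cast Nat.div_add_mod (2*r) S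
  have hmod : (((2*r)%S : ℕ):ℤ) < (S:ℤ) := by exact_mod_cast Nat.mod_lt (2*r) hS
  have hq2r' : 2*(r:ℤ) < (S:ℤ)*(q:ℤ) + (S:ℤ) := by linarith
  have hvan : ∀ n' : Fin N, (∀ t : Fin (2*q+1), ψ t ≠ n') →
      (layerMat M C r S N K * (layerMat M C r S N K)ᵀ) ((m,n)) ((l,n')) = 0 := by
    intro n' hnone
    rw [gram_entry M C r S N hS K m l n n']
    apply Finset.sum_eq_zero; intro c _
    apply Finset.sum_eq_zero; intro a _
    apply Finset.sum_eq_zero; intro b _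
    rw [if_neg, mul_zero]
    intro hcon
    have hcon2 : (((((a:ℕ):ℤ) - ((b:ℕ):ℤ)) : ℤ) : Fin (S*N))
        = (((((S*(n':ℕ):ℕ)):ℤ) - (((S*(n:ℕ):ℕ)):ℤ) : ℤ) : Fin (S*N)) := by
      push_cast at hcon ⊢
      linear_combination hcon
    have hdvd := (fin_intCast_eq_iff _ _ _).mp hcon2
    have hSe : (S:ℤ) ∣ (((a:ℕ):ℤ) - ((b:ℕ):ℤ)) := by
      have h1 : (S:ℤ) ∣ (((((S*(n':ℕ):ℕ)):ℤ) - (((S*(n:ℕ):ℕ)):ℤ)) - ((((a:ℕ):ℤ) - ((b:ℕ):ℤ)))) :=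
        dvd_trans ⟨(N:ℤ), by rw [← hSN']⟩ hdvd
      have h2 : (S:ℤ) ∣ ((((S*(n':ℕ):ℕ)):ℤ) - (((S*(n:ℕ):ℕ)):ℤ)) :=
        ⟨((n':ℕ):ℤ) - ((n:ℕ):ℤ), by push_cast; ring⟩
      have h3 := dvd_sub h2 h1
      rw [show (((((S*(n':ℕ):ℕ)):ℤ) - (((S*(n:ℕ):ℕ)):ℤ))
          - ((((((S*(n':ℕ):ℕ)):ℤ) - (((S*(n:ℕ):ℕ)):ℤ)) - ((((a:ℕ):ℤ) - ((b:ℕ):ℤ)))))) =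
        ((((a:ℕ):ℤ) - ((b:ℕ):ℤ))) by ring] at h3
      exact h3
    obtain ⟨f, hf⟩ := hSe
    have ha2 : ((a:ℕ):ℤ) ≤ 2*(r:ℤ) := by exact_mod_cast Nat.lt_succ_iff.mp a.isLt
    have hb2 : ((b:ℕ):ℤ) ≤ 2*(r:ℤ) := by exact_mod_cast Nat.lt_succ_iff.mp b.isLt
    have ha0 : (0:ℤ) ≤ ((a:ℕ):ℤ) := Int.natCast_nonneg _
    have hb0 : (0:ℤ) ≤ ((b:ℕ):ℤ) := Int.natCast_nonneg _
    have hfq1 : f ≤ (q:ℤ) := by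
      by_contra hc; push_neg at hc
      have h4 : (S:ℤ)*((q:ℤ)+1) ≤ (S:ℤ)*f := mul_le_mul_of_nonneg_left (by linarith) (by positivity)
      nlinarith
    have hfq2 : -(q:ℤ) ≤ f := by
      by_contra hc; push_neg at hc
      have h4 : (S:ℤ)*f ≤ (S:ℤ)*(-(q:ℤ)-1) := mul_le_mul_of_nonneg_left (by linarith) (by positivity)
      nlinarith
    have hfq0 : (0:ℤ) ≤ (q:ℤ) - f := by linarith
    set tv : ℕ := ((q:ℤ) - f).toNat with htvdef
    have htv : (tv:ℤ) = (q:ℤ) - f := Int.toNat_of_nonneg hfq0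
    have htlt : tv < 2*q+1 := by
      have h5 : (tv:ℤ) ≤ 2*(q:ℤ) := by rw [htv]; linarith
      exact_mod_cast (by push_cast; linarith : ((tv:ℕ):ℤ) < ((2*q+1 : ℕ):ℤ))
    apply hnone ⟨tv, htlt⟩
    rw [hpsi]
    apply (fin_eq_intCast_iff N n' _).mpr
    have hX : (N:ℤ) ∣ ((((n':ℕ):ℤ) - (((n:ℕ):ℤ)) - f)) := by
      apply (mul_dvd_mul_iff_left hS0).mp
      rw [show ((S:ℤ)*((((n':ℕ):ℤ) - (((n:ℕ):ℤ)) - f))) =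
        ((((((S*(n':ℕ):ℕ)):ℤ) - (((S*(n:ℕ):ℕ)):ℤ)) - ((((a:ℕ):ℤ) - ((b:ℕ):ℤ))))) by
          push_cast; linear_combination hf]
      rw [← hSN']
      exact hdvd
    rw [show ((((n':ℕ):ℤ)) - ((((n:ℕ):ℤ) + (q:ℤ) -
        ((((⟨tv, htlt⟩ : Fin (2*q+1)) : ℕ)):ℤ)))) = ((((n':ℕ):ℤ) - (((n:ℕ):ℤ)) - f)) by
      simp only [Fin.val_mk]; rw [htv]; ring]
    exact hX
  have hz : ∀ n' ∈ Finset.univ, n' ∉ Finset.univ.image ψ →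
      ((layerMat M C r S N K * (layerMat M C r S N K)ᵀ) ((m,n)) ((l,n'))
        - if ((m,n) : Fin M × Fin N) = (l,n') then 1 else 0)^2 = 0 := by
    intro n' _ hn'
    have hnone : ∀ t : Fin (2*q+1), ψ t ≠ n' := by
      intro t hc; exact hn' (Finset.mem_image.mpr ⟨t, Finset.mem_univ _, hc⟩)
    have hne : ¬ (((m,n) : Fin M × Fin N) = (l,n')) := by
      intro hc
      have h2 : n = n' := congrArg Prod.snd hc
      exact hnone ⟨q, by omega⟩ (by rw [hpsiq]; exact h2)
    rw [hvan n' hnone, if_neg hne]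
    norm_num
  rw [← Finset.sum_subset (Finset.subset_univ (Finset.univ.image ψ)) hz,
      Finset.sum_image (fun t _ t' _ h => hinj h)]
  apply Finset.sum_congr rfl
  intro t _
  have ht2q : ((t:ℕ):ℤ) ≤ 2*(q:ℤ) := by exact_mod_cast Nat.lt_succ_iff.mp t.isLt
  have ht0 : (0:ℤ) ≤ ((t:ℕ):ℤ) := Int.natCast_nonneg _
  have hSt : (S:ℤ)*((t:ℕ):ℤ) ≤ (S:ℤ)*(2*(q:ℤ)) := mul_le_mul_of_nonneg_left ht2q (by positivity)
  have hSt0 : (0:ℤ) ≤ (S:ℤ)*((t:ℕ):ℤ) := by positivity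
  have hE : (layerMat M C r S N K * (layerMat M C r S N K)ᵀ) ((m,n)) ((l, ψ t))
      = ∑ c : Fin C, convPS r S (K m c) (K l c) t := by
    rw [gram_entry M C r S N hS K m l n (ψ t)]
    apply Finset.sum_congr rfl
    intro c _
    rw [← conv_eq r S (K m c) (K l c) t]
    apply Finset.sum_congr rfl; intro a _
    apply Finset.sum_congr rfl; intro b _
    congr 1
    have ha2 : ((a:ℕ):ℤ) ≤ 2*(r:ℤ) := by exact_mod_cast Nat.lt_succ_iff.mp a.isLt
    have hb2 : ((b:ℕ):ℤ) ≤ 2*(r:ℤ) := by exact_mod_cast Nat.lt_succ_iff.mp b.isLt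
    have ha0 : (0:ℤ) ≤ ((a:ℕ):ℤ) := Int.natCast_nonneg _
    have hb0 : (0:ℤ) ≤ ((b:ℕ):ℤ) := Int.natCast_nonneg _
    have hvalt := hval t
    apply if_congr _ rfl rfl
    constructor
    · intro hcon
      have hcon2 : (((((a:ℕ):ℤ) - ((b:ℕ):ℤ)) : ℤ) : Fin (S*N))
          = (((((S*((ψ t):ℕ):ℕ)):ℤ) - (((S*(n:ℕ):ℕ)):ℤ) : ℤ) : Fin (S*N)) := by
        push_cast at hcon ⊢
        linear_combination hcon
      have hdvd := (fin_intCast_eq_iff _ _ _).mp hcon2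
      have hD2 : ((S*N:ℕ):ℤ) ∣ ((S:ℤ)*(((((n:ℕ):ℤ) + (q:ℤ) - ((t:ℕ):ℤ)) - ((((ψ t):ℕ)):ℤ)))) := by
        rw [hSN']
        exact mul_dvd_mul_left (S:ℤ) hvalt
      have hsum := dvd_add hdvd hD2
      have hx0 : ((((S:ℤ)*(q:ℤ) - (S:ℤ)*((t:ℕ):ℤ)) - ((((a:ℕ):ℤ) - ((b:ℕ):ℤ))))) = 0 := by
        apply int_dvd_small ((S*N:ℕ):ℤ) _ hSNpos
        · rw [show (((((S*((ψ t):ℕ):ℕ)):ℤ) - (((S*(n:ℕ):ℕ)):ℤ)) - ((((a:ℕ):ℤ) - ((b:ℕ):ℤ)))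
            + ((S:ℤ)*(((((n:ℕ):ℤ) + (q:ℤ) - ((t:ℕ):ℤ)) - ((((ψ t):ℕ)):ℤ))))) =
            ((((S:ℤ)*(q:ℤ) - (S:ℤ)*((t:ℕ):ℤ)) - ((((a:ℕ):ℤ) - ((b:ℕ):ℤ))))) by
              push_cast; ring] at hsum
          exact hsum
        · linarith
        · linarith
      rw [Nat.cast_mul, Nat.cast_mul]
      linear_combination -hx0
    · intro hcon
      rw [Nat.cast_mul, Nat.cast_mul] at hcon
      have hdvd : ((S*N:ℕ):ℤ) ∣ (((((S*((ψ t):ℕ):ℕ)):ℤ) - (((S*(n:ℕ):ℕ)):ℤ))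
          - ((((a:ℕ):ℤ) - ((b:ℕ):ℤ)))) := by
        rw [show ((((((S*((ψ t):ℕ):ℕ)):ℤ) - (((S*(n:ℕ):ℕ)):ℤ))
            - ((((a:ℕ):ℤ) - ((b:ℕ):ℤ))))) =
          (-((S:ℤ)*(((((n:ℕ):ℤ) + (q:ℤ) - ((t:ℕ):ℤ)) - ((((ψ t):ℕ)):ℤ))))) by
            push_cast; linear_combination -hcon]
        rw [hSN']
        exact (mul_dvd_mul_left (S:ℤ) hvalt).neg_right
      have h5 := (fin_intCast_eq_iff (S*N) _ _).mpr hdvd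
      push_cast at h5 ⊢
      linear_combination h5
  have hδ : (if ((m,n) : Fin M × Fin N) = (l, ψ t) then (1:ℝ) else 0)
      = (if m = l ∧ (t:ℕ) = q then (1:ℝ) else 0) := by
    apply if_congr _ rfl rfl
    rw [Prod.mk.injEq]
    exact and_congr Iff.rfl (hneq t)
  rw [hE, hδ]

/-- Frobenius stability, 1D CO case: for `M ≥ CS` and `SN ≥ 2k−1`,
`‖𝒦ᵀ𝒦 − I_{CSN}‖_F² = N · (‖CONV(K,K,padding = P,stride = S) − I_{r0}‖_F² − (M − CS))`. -/
theorem stmt15 (M C r S N : ℕ) [NeZero (S*N)] (hM : C*S ≤ M) (hN : 4*r+1 ≤ S*N)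
    (K : Fin M → Fin C → Fin (2*r+1) → ℝ) :
    frob2 ((layerMat M C r S N K)ᵀ * layerMat M C r S N K - 1)
      = (N : ℝ) *
        ((∑ m : Fin M, ∑ l : Fin M, ∑ t : Fin (2*((2*r)/S)+1),
            ((∑ c : Fin C, convPS r S (K m c) (K l c) t) -
              (if m = l ∧ (t : ℕ) = (2*r)/S then 1 else 0)) ^ 2) -
          ((M : ℝ) - (C : ℝ) * (S : ℝ))) := by
  have hSN0 : S*N ≠ 0 := NeZero.ne _
  have hS : 0 < S := Nat.pos_of_ne_zero (fun h => hSN0 (by simp [h]))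
  have hNpos : 0 < N := Nat.pos_of_ne_zero (fun h => hSN0 (by simp [h]))
  haveI : NeZero N := ⟨hNpos.ne'⟩
  have hmain : frob2 (layerMat M C r S N K * (layerMat M C r S N K)ᵀ - 1)
      = (N : ℝ) * (∑ m : Fin M, ∑ l : Fin M, ∑ t : Fin (2*((2*r)/S)+1),
            ((∑ c : Fin C, convPS r S (K m c) (K l c) t) -
              (if m = l ∧ (t : ℕ) = (2*r)/S then 1 else 0)) ^ 2) := by
    have step1 : frob2 (layerMat M C r S N K * (layerMat M C r S N K)ᵀ - 1)
        = ∑ m : Fin M, ∑ n : Fin N, ∑ l : Fin M, ∑ n' : Fin N,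
            ((layerMat M C r S N K * (layerMat M C r S N K)ᵀ) ((m,n)) ((l,n'))
              - if ((m,n) : Fin M × Fin N) = (l,n') then 1 else 0)^2 := by
      unfold frob2
      simp only [Matrix.sub_apply, Matrix.one_apply]
      rw [Fintype.sum_prod_type]
      apply Finset.sum_congr rfl; intro m _
      apply Finset.sum_congr rfl; intro n _
      rw [Fintype.sum_prod_type]
    rw [step1]
    have step2 : ∀ (m : Fin M) (n : Fin N) (l : Fin M),
        (∑ n' : Fin N,
          ((layerMat M C r S N K * (layerMat M C r S N K)ᵀ) ((m,n)) ((l,n'))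
            - if ((m,n) : Fin M × Fin N) = (l,n') then 1 else 0)^2)
        = ∑ t : Fin (2*((2*r)/S)+1),
            ((∑ c : Fin C, convPS r S (K m c) (K l c) t)
              - if m = l ∧ (t:ℕ) = (2*r)/S then 1 else 0)^2 :=
      fun m n l => rowSum M C r S N hS hN K m l n
    calc ∑ m : Fin M, ∑ n : Fin N, ∑ l : Fin M, ∑ n' : Fin N,
            ((layerMat M C r S N K * (layerMat M C r S N K)ᵀ) ((m,n)) ((l,n'))
              - if ((m,n) : Fin M × Fin N) = (l,n') then 1 else 0)^2
        = ∑ m : Fin M, ∑ n : Fin N, ∑ l : Fin M, ∑ t : Fin (2*((2*r)/S)+1),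
            ((∑ c : Fin C, convPS r S (K m c) (K l c) t)
              - if m = l ∧ (t:ℕ) = (2*r)/S then 1 else 0)^2 := by
          apply Finset.sum_congr rfl; intro m _
          apply Finset.sum_congr rfl; intro n _
          apply Finset.sum_congr rfl; intro l _
          exact step2 m n l
      _ = ∑ m : Fin M, (N:ℝ) * ∑ l : Fin M, ∑ t : Fin (2*((2*r)/S)+1),
            ((∑ c : Fin C, convPS r S (K m c) (K l c) t)
              - if m = l ∧ (t:ℕ) = (2*r)/S then 1 else 0)^2 := by
          apply Finset.sum_congr rfl; intro m _
          rw [Finset.sum_const, Finset.card_univ, Fintype.card_fin, nsmul_eq_mul]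
      _ = (N:ℝ) * ∑ m : Fin M, ∑ l : Fin M, ∑ t : Fin (2*((2*r)/S)+1),
            ((∑ c : Fin C, convPS r S (K m c) (K l c) t)
              - if m = l ∧ (t:ℕ) = (2*r)/S then 1 else 0)^2 := by
          rw [Finset.mul_sum]
  rw [frob2_gram, hmain]
  simp only [Fintype.card_prod, Fintype.card_fin]
  push_cast
  ring
end
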